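/- Fix x=(x₂,x₃)∈ℝ² with x₂² ≠ x₃², and define Ψ: ℝ → ℝ² by Ψ(s) = ( cosh(s)·A'(y(s)) + sinh(s)·B'(y(s)), sinh(s)·A'(y(s)) + cosh(s)·B'(y(s)) ), where y(s) = (x₂·cosh s − x₃·sinh s, −x₂·sinh s + x₃·cosh s). Then Ψ is locally constant on the open set {s ∈ ℝ : −x₂·sinh s + x₃·cosh s ≠ 0}. (This is paper Lemma 5.9: the 1-form ψ̃'₀,₁(x,s) is locally constant on D_W outside the singularity D_{W,x}; the excluded set is where the second coordinate of m(−s)x vanishes.) -/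

import Mathlib

open MeasureTheory

/-- The `e₃`-component `B'` of the singular function `ψ̃'₀,₁`. -/
noncomputable def B' (x : ℝ × ℝ) : ℝ :=
  if x.1 ^ 2 - x.2 ^ 2 > 0 then
    (1/2) * min |x.1 - x.2| |x.1 + x.2| * Real.exp (-(Real.pi * (x.1 ^ 2 - x.2 ^ 2)))
  else 0

/-- The `e₂`-component `A'` of the singular function `ψ̃'₀,₁`. -/
noncomputable def A' (x : ℝ × ℝ) : ℝ := - Real.sign (x.1 * x.2) * B' x

/-- `y(s) = m(-s)x` for `x = (x₂,x₃)` in the Minkowski plane of signature `(1,1)`. -/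
noncomputable def yv (x₂ x₃ s : ℝ) : ℝ × ℝ :=
  (x₂ * Real.cosh s - x₃ * Real.sinh s, -x₂ * Real.sinh s + x₃ * Real.cosh s)

/-- The equivariant extension `Ψ(s) = m(s)·(A'(m(-s)x), B'(m(-s)x))`. -/
noncomputable def Psi (x₂ x₃ s : ℝ) : ℝ × ℝ :=
  (Real.cosh s * A' (yv x₂ x₃ s) + Real.sinh s * B' (yv x₂ x₃ s),
   Real.sinh s * A' (yv x₂ x₃ s) + Real.cosh s * B' (yv x₂ x₃ s))

/-!
The boost `m(-t)` preserves `q = x₂² - x₃²` and scales the light-cone coordinates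
`y₁ - y₂`, `y₁ + y₂` of `y = m(-t)x` by `eᵗ` and `e⁻ᵗ`. For `q < 0` everything vanishes. For
`q > 0` the coordinate `y₁` never vanishes, so off `{y₂ = 0}` the sign of `y₁y₂` is locally
constant; on the cone `y₁y₂ > 0` the minimum in `B'` is `|y₁ - y₂| = |x₂ - x₃| eᵗ` and the
boost `m(t)` cancels the factor `eᵗ`, so `Ψ` is constant there (symmetrically for `y₁y₂ < 0`).
-/

open Real Filter Topology

lemma min_abs_sub_abs_add_of_mul_pos {a b : ℝ} (h : 0 < a * b) :
    min |a - b| |a + b| = |a - b| :=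
  min_eq_left (sq_le_sq.mp (by nlinarith))

lemma min_abs_sub_abs_add_of_mul_neg {a b : ℝ} (h : a * b < 0) :
    min |a - b| |a + b| = |a + b| :=
  min_eq_right (sq_le_sq.mp (by nlinarith))

section yv

variable (x₂ x₃ : ℝ)

lemma continuous_yv : Continuous (yv x₂ x₃) := by
  unfold yv; fun_prop

lemma yv_fst_sq_sub_snd_sq (t : ℝ) :
    (yv x₂ x₃ t).1 ^ 2 - (yv x₂ x₃ t).2 ^ 2 = x₂ ^ 2 - x₃ ^ 2 := by
  simp only [yv]
  linear_combination (x₂ ^ 2 - x₃ ^ 2) * cosh_sq_sub_sinh_sq t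

lemma yv_fst_sub_snd (t : ℝ) : (yv x₂ x₃ t).1 - (yv x₂ x₃ t).2 = (x₂ - x₃) * exp t := by
  simp only [yv, ← cosh_add_sinh]; ring

lemma yv_fst_add_snd (t : ℝ) : (yv x₂ x₃ t).1 + (yv x₂ x₃ t).2 = (x₂ + x₃) * exp (-t) := by
  simp only [yv, ← cosh_sub_sinh]; ring

variable {x₂ x₃}

lemma yv_fst_ne_zero (hq : 0 < x₂ ^ 2 - x₃ ^ 2) (t : ℝ) : (yv x₂ x₃ t).1 ≠ 0 := by
  intro h
  have := yv_fst_sq_sub_snd_sq x₂ x₃ t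
  rw [h] at this
  nlinarith [sq_nonneg (yv x₂ x₃ t).2]

end yv

section Psi

variable {x₂ x₃ : ℝ}

lemma Psi_eq_zero_of_neg (hq : x₂ ^ 2 - x₃ ^ 2 < 0) (t : ℝ) : Psi x₂ x₃ t = 0 := by
  have hB : B' (yv x₂ x₃ t) = 0 := by
    rw [B', if_neg (by rw [yv_fst_sq_sub_snd_sq]; exact hq.not_gt)]
  simp [Psi, A', hB]

lemma Psi_of_mul_pos (hq : 0 < x₂ ^ 2 - x₃ ^ 2) {t : ℝ}
    (hp : 0 < (yv x₂ x₃ t).1 * (yv x₂ x₃ t).2) :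
    Psi x₂ x₃ t =
      (-(1/2 * |x₂ - x₃| * exp (-(π * (x₂ ^ 2 - x₃ ^ 2)))),
        1/2 * |x₂ - x₃| * exp (-(π * (x₂ ^ 2 - x₃ ^ 2)))) := by
  have hboost : (cosh t - sinh t) * exp t = 1 := by
    rw [cosh_sub_sinh, ← exp_add, neg_add_cancel, exp_zero]
  simp only [Psi, A', B', yv_fst_sq_sub_snd_sq, if_pos hq, sign_of_pos hp,
    min_abs_sub_abs_add_of_mul_pos hp]
  simp only [yv_fst_sub_snd, abs_mul, abs_exp, Prod.mk.injEq]
  constructor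
  · linear_combination (-(1/2 * |x₂ - x₃| * exp (-(π * (x₂ ^ 2 - x₃ ^ 2))))) * hboost
  · linear_combination (1/2 * |x₂ - x₃| * exp (-(π * (x₂ ^ 2 - x₃ ^ 2)))) * hboost

lemma Psi_of_mul_neg (hq : 0 < x₂ ^ 2 - x₃ ^ 2) {t : ℝ}
    (hp : (yv x₂ x₃ t).1 * (yv x₂ x₃ t).2 < 0) :
    Psi x₂ x₃ t =
      (1/2 * |x₂ + x₃| * exp (-(π * (x₂ ^ 2 - x₃ ^ 2))),
        1/2 * |x₂ + x₃| * exp (-(π * (x₂ ^ 2 - x₃ ^ 2)))) := by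
  have hboost : (cosh t + sinh t) * exp (-t) = 1 := by
    rw [cosh_add_sinh, ← exp_add, add_neg_cancel, exp_zero]
  simp only [Psi, A', B', yv_fst_sq_sub_snd_sq, if_pos hq, sign_of_neg hp,
    min_abs_sub_abs_add_of_mul_neg hp]
  simp only [yv_fst_add_snd, abs_mul, abs_exp, Prod.mk.injEq]
  constructor <;>
    linear_combination (1/2 * |x₂ + x₃| * exp (-(π * (x₂ ^ 2 - x₃ ^ 2)))) * hboost

end Psi

/-- Paper Lemma 5.9: for `x₂² ≠ x₃²`, the 1-form `ψ̃'₀,₁(x,s)` is locally constant on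
`D_W ≅ ℝ` outside the singularity, i.e. `Ψ` is locally constant on the open set
`{s : -x₂·sinh s + x₃·cosh s ≠ 0}`. -/
theorem stmt19 (x₂ x₃ : ℝ) (hx : x₂ ^ 2 ≠ x₃ ^ 2) (s : ℝ)
    (hs : -x₂ * Real.sinh s + x₃ * Real.cosh s ≠ 0) :
    ∀ᶠ t in nhds s, Psi x₂ x₃ t = Psi x₂ x₃ s := by
  rcases (sub_ne_zero_of_ne hx).lt_or_gt with hq | hq
  · exact Eventually.of_forall fun t => by rw [Psi_eq_zero_of_neg hq, Psi_eq_zero_of_neg hq]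
  set p : ℝ → ℝ := fun t => (yv x₂ x₃ t).1 * (yv x₂ x₃ t).2
  have hp : Continuous p := by
    have := continuous_yv x₂ x₃; fun_prop
  rcases (mul_ne_zero (yv_fst_ne_zero hq s) hs).lt_or_gt with hneg | hpos
  · filter_upwards [hp.continuousAt.eventually_lt continuousAt_const hneg] with t ht
    rw [Psi_of_mul_neg hq ht, Psi_of_mul_neg hq hneg]
  · filter_upwards [continuousAt_const.eventually_lt hp.continuousAt hpos] with t ht
    rw [Psi_of_mul_pos hq ht, Psi_of_mul_pos hq hpos]
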